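/- For each n, equip Ω_n = {0,1}^n with the uniform probability measure, and for 0 ≤ k ≤ n let E^*_k denote the averaging operator (E^*_k f)(x_1,…,x_n) = 2^{−k} ∑_{y_1,…,y_k ∈ {0,1}} f(y_1,…,y_k,x_{k+1},…,x_n) (conditional expectation onto the σ-algebra of sets depending only on the last n−k coordinates), with the convention E^*_{n+1} = E^*_n. Then there is no universal constant: for every c > 0 there exist n and functions f_0,…,f_n on Ω_n satisfying E^*_{k+1} f_k = 0 for all 0 ≤ k ≤ n, for which E (∑_{k=0}^n |f_k|²)^{1/2} < c · E (∑_{k=0}^n |E^*_k f_k|²)^{1/2}. -/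

import Mathlib

open MeasureTheory

/-- Expectation with respect to the uniform probability measure on `{0,1}^n`. -/
noncomputable def cubeExpect (n : ℕ) (g : (Fin n → Bool) → ℝ) : ℝ :=
  (∑ x : Fin n → Bool, g x) / 2 ^ n

/-- The averaging operator `E^*_k` on `{0,1}^n`: average over the first `k` coordinates
(conditional expectation onto the σ-algebra of sets depending only on the last `n - k`
coordinates).  For `k ≥ n` this is the full average, so in particular
`cubeEstar n (n+1) = cubeEstar n n`. -/
noncomputable def cubeEstar (n k : ℕ) (f : (Fin n → Bool) → ℝ) : (Fin n → Bool) → ℝ :=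
  fun x => (∑ y : Fin n → Bool, f (fun i => if (i : ℕ) < k then y i else x i)) / 2 ^ n

/-!
Take `n = 2m`, let `A` be the event that all even coordinates equal `1`, and for odd `k < 2m`
let `f_k = ±1_A`, the sign being the coordinate `k` (and `f_k = 0` for the other `k`). Averaging
over coordinate `k` kills `f_k`, and `|f_k| = 1_A`, so `E (∑ |f_k|²)^{1/2} = √m 2^{-m}`.
Averaging over the coordinates below `2d - 1` frees the `d` even coordinates below `2d`, so
`|E^*_{2d-1} f_{2d-1}| = 2^{-d} 1_{B_d}` with `B_d = {x_i = 1 for even i ≥ 2d}`, an event of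
probability `2^{d-m}`. If `d` is least with `x ∈ B_d`, the square function at `x` is at least
`2^{-d} ≥ ∑_{t < m} 2^{-t-2} 1_{B_t}(x)`, so its expectation is at least `m 2^{-m-2}`: the
ratio of the two sides is `4 / √m`.
-/

open Finset

section Cube

variable {n : ℕ}

theorem cubeEstar_prod (k : ℕ) (G : Fin n → Bool → ℝ) (x : Fin n → Bool) :
    cubeEstar n k (fun z => ∏ i, G i (z i)) x =
      ∏ i : Fin n, if (i : ℕ) < k then (G i true + G i false) / 2 else G i (x i) := by
  set H : Fin n → Bool → ℝ := fun i b => G i (if (i : ℕ) < k then b else x i)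
  have hsum : ∑ y : Fin n → Bool, ∏ i, H i (y i) = ∏ i, (H i true + H i false) := by
    rw [← Fintype.prod_sum]
    exact prod_congr rfl fun i _ => Fintype.sum_bool _
  rw [cubeEstar, hsum, ← Fin.prod_const n (2 : ℝ), ← prod_div_distrib]
  refine prod_congr rfl fun i _ => ?_
  simp only [H]
  split_ifs <;> ring

theorem cubeExpect_eq_cubeEstar (g : (Fin n → Bool) → ℝ) (x : Fin n → Bool) :
    cubeExpect n g = cubeEstar n n g x := by
  simp [cubeExpect, cubeEstar]

theorem cubeExpect_mono {g h : (Fin n → Bool) → ℝ} (hgh : ∀ x, g x ≤ h x) :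
    cubeExpect n g ≤ cubeExpect n h :=
  div_le_div_of_nonneg_right (sum_le_sum fun x _ => hgh x) (by positivity)

theorem cubeExpect_sum {ι : Type*} (s : Finset ι) (g : ι → (Fin n → Bool) → ℝ) :
    cubeExpect n (fun x => ∑ t ∈ s, g t x) = ∑ t ∈ s, cubeExpect n (g t) := by
  simp only [cubeExpect, ← sum_div]
  rw [sum_comm]

theorem cubeExpect_const_mul (a : ℝ) (g : (Fin n → Bool) → ℝ) :
    cubeExpect n (fun x => a * g x) = a * cubeExpect n g := by
  simp only [cubeExpect, ← mul_sum, mul_div_assoc]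

end Cube

section SignedIndicator

variable {n : ℕ}

def boolSign (b : Bool) : ℝ := if b then 1 else -1

theorem abs_boolSign (b : Bool) : |boolSign b| = 1 := by
  cases b <;> simp [boolSign]

def allTrueOn (S : Finset (Fin n)) (x : Fin n → Bool) : ℝ :=
  if ∀ i ∈ S, x i = true then 1 else 0

theorem allTrueOn_nonneg (S : Finset (Fin n)) (x : Fin n → Bool) : 0 ≤ allTrueOn S x := by
  unfold allTrueOn; split_ifs <;> norm_num

theorem allTrueOn_le_one (S : Finset (Fin n)) (x : Fin n → Bool) : allTrueOn S x ≤ 1 := by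
  unfold allTrueOn; split_ifs <;> norm_num

theorem allTrueOn_mul_self (S : Finset (Fin n)) (x : Fin n → Bool) :
    allTrueOn S x * allTrueOn S x = allTrueOn S x := by
  unfold allTrueOn; split_ifs <;> norm_num

theorem sqrt_allTrueOn (S : Finset (Fin n)) (x : Fin n → Bool) :
    √(allTrueOn S x) = allTrueOn S x := by
  unfold allTrueOn; split_ifs <;> simp

theorem allTrueOn_eq_prod (S : Finset (Fin n)) (x : Fin n → Bool) :
    allTrueOn S x = ∏ i ∈ S, if x i then 1 else 0 := by
  simp [allTrueOn, prod_boole]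

theorem cubeExpect_allTrueOn (S : Finset (Fin n)) :
    cubeExpect n (allTrueOn S) = (1 / 2) ^ #S := by
  have hprod : allTrueOn S = fun z => ∏ i, if i ∈ S then (if z i then 1 else 0) else 1 := by
    ext z
    rw [Fintype.prod_ite_mem, allTrueOn_eq_prod]
  rw [cubeExpect_eq_cubeEstar _ (fun _ => true), hprod,
    cubeEstar_prod n (fun i b => if i ∈ S then (if b then 1 else 0) else 1)]
  rw [← prod_const, ← Fintype.prod_ite_mem S]
  refine prod_congr rfl fun i _ => ?_
  by_cases hi : i ∈ S <;> simp [hi]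

def signedIndicator (j : Fin n) (S : Finset (Fin n)) (x : Fin n → Bool) : ℝ :=
  boolSign (x j) * allTrueOn S x

theorem signedIndicator_eq_prod {j : Fin n} {S : Finset (Fin n)} :
    signedIndicator j S = fun z => ∏ i,
      (if i = j then boolSign (z i) else 1) * (if i ∈ S then (if z i then 1 else 0) else 1) := by
  ext z
  rw [prod_mul_distrib, prod_ite_eq', Fintype.prod_ite_mem, ← allTrueOn_eq_prod]
  simp [signedIndicator]

theorem cubeEstar_signedIndicator {j : Fin n} {S : Finset (Fin n)} (hj : j ∉ S) (k : ℕ)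
    (x : Fin n → Bool) :
    cubeEstar n k (signedIndicator j S) x =
      (if (j : ℕ) < k then 0 else boolSign (x j)) *
        (1 / 2) ^ #(S.filter fun i : Fin n => (i : ℕ) < k) *
        allTrueOn (S.filter fun i : Fin n => k ≤ (i : ℕ)) x := by
  -- A factor of the averaged product is the sign coordinate, a selector averaged to `1 / 2`,
  -- or a selector that is not averaged.
  have hfactor : ∀ i : Fin n,
      (if (i : ℕ) < k then
        ((if i = j then boolSign true else 1) +
          (if i = j then boolSign false else 1) * (if i ∈ S then 0 else 1)) / 2
      else
        (if i = j then boolSign (x i) else 1) * (if i ∈ S then (if x i then 1 else 0) else 1)) =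
        (if i = j then (if (j : ℕ) < k then 0 else boolSign (x j)) else 1) *
          (if i ∈ S.filter (fun i : Fin n => (i : ℕ) < k) then 1 / 2 else 1) *
          (if i ∈ S.filter (fun i : Fin n => k ≤ (i : ℕ)) then (if x i then 1 else 0)
            else 1) := by
    intro i
    by_cases hij : i = j
    · subst hij
      split_ifs <;> simp_all [boolSign]
    · by_cases hik : (i : ℕ) < k <;> by_cases hiS : i ∈ S <;> cases x i <;>
        simp [hij, hik, hiS]
  rw [signedIndicator_eq_prod, cubeEstar_prod k (fun i b =>
      (if i = j then boolSign b else 1) * (if i ∈ S then (if b then 1 else 0) else 1))]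
  simp only [Bool.false_eq_true, if_true, if_false, ite_self, mul_one]
  rw [prod_congr rfl fun i _ => hfactor i, prod_mul_distrib, prod_mul_distrib, prod_ite_eq',
    Fintype.prod_ite_mem, Fintype.prod_ite_mem, prod_const, ← allTrueOn_eq_prod,
    if_pos (mem_univ j)]

end SignedIndicator

theorem sum_range_half_pow_mul_le {a : ℕ → ℝ} (ha1 : ∀ t, a t ≤ 1) {d : ℕ}
    (hd : ∀ t < d, a t = 0) (N : ℕ) :
    ∑ t ∈ range N, (1 / 2 : ℝ) ^ (t + 1) * a t ≤ (1 / 2) ^ d := by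
  have hpointwise : ∀ t ∈ range N,
      (1 / 2 : ℝ) ^ (t + 1) * a t ≤ if t ∈ Ico d N then (1 / 2) ^ (t + 1) else 0 := by
    intro t ht
    split_ifs with htd
    · exact mul_le_of_le_one_right (by positivity) (ha1 t)
    · rw [hd t (by simp_all), mul_zero]
  calc ∑ t ∈ range N, (1 / 2 : ℝ) ^ (t + 1) * a t
      ≤ ∑ t ∈ range N, if t ∈ Ico d N then (1 / 2 : ℝ) ^ (t + 1) else 0 :=
        sum_le_sum hpointwise
    _ = 1 / 2 * ∑ t ∈ Ico d N, (1 / 2 : ℝ) ^ t := by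
      rw [← sum_filter, mul_sum]
      refine sum_congr (by ext t; simp) fun t _ => pow_succ' _ _
    _ ≤ 1 / 2 * ((1 / 2) ^ d / (1 - 1 / 2)) := by
      gcongr
      exact geom_sum_Ico_le_of_lt_one (by norm_num) (by norm_num)
    _ = (1 / 2) ^ d := by ring

section Construction

variable (m : ℕ)

def evenFrom (t : ℕ) : Finset (Fin (2 * m)) := {i | (i : ℕ) % 2 = 0 ∧ 2 * t ≤ (i : ℕ)}

theorem card_evenFrom (t : ℕ) : #(evenFrom m t) = m - t := by
  have hmap : (evenFrom m t).map Fin.valEmbedding =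
      (Ico t m).map ⟨(2 * ·), mul_right_injective₀ two_ne_zero⟩ := by
    ext i
    simp only [evenFrom, mem_map, mem_filter, mem_univ, true_and, mem_Ico,
      Fin.valEmbedding_apply, Function.Embedding.coeFn_mk]
    constructor
    · rintro ⟨i, hi, rfl⟩
      exact ⟨i / 2, by omega, by omega⟩
    · rintro ⟨j, hj, rfl⟩
      exact ⟨⟨2 * j, by omega⟩, by simp [hj.1], rfl⟩
  rw [← card_map Fin.valEmbedding, hmap, card_map, Nat.card_Ico]

theorem evenFrom_anti {t t' : ℕ} (h : t ≤ t') : evenFrom m t' ⊆ evenFrom m t := by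
  intro i
  simp only [evenFrom, mem_filter, mem_univ, true_and]
  omega

theorem notMem_evenFrom {i : Fin (2 * m)} (hi : (i : ℕ) % 2 = 1) (t : ℕ) :
    i ∉ evenFrom m t := by
  simp [evenFrom]
  omega

def steinFamily (k : ℕ) : (Fin (2 * m) → Bool) → ℝ :=
  if h : k < 2 * m ∧ k % 2 = 1 then signedIndicator ⟨k, h.1⟩ (evenFrom m 0) else 0

theorem cubeEstar_succ_steinFamily (k : ℕ) : cubeEstar (2 * m) (k + 1) (steinFamily m k) = 0 := by
  ext x
  unfold steinFamily
  split_ifs with h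
  · rw [cubeEstar_signedIndicator (notMem_evenFrom m h.2 0)]
    simp
  · simp [cubeEstar]

theorem card_filter_odd_range : #{k ∈ range (2 * m + 1) | k < 2 * m ∧ k % 2 = 1} = m := by
  have himage : {k ∈ range (2 * m + 1) | k < 2 * m ∧ k % 2 = 1} =
      (range m).image (2 * · + 1) := by
    ext k
    simp only [mem_filter, mem_range, mem_image]
    constructor
    · rintro ⟨-, hk⟩
      exact ⟨k / 2, by omega, by omega⟩
    · rintro ⟨j, hj, rfl⟩
      omega
  rw [himage, card_image_of_injective _ fun a b h => by simpa using h, card_range]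

theorem sum_sq_steinFamily (x : Fin (2 * m) → Bool) :
    ∑ k ∈ range (2 * m + 1), steinFamily m k x ^ 2 = m * allTrueOn (evenFrom m 0) x := by
  have hsq : ∀ k, steinFamily m k x ^ 2 =
      if k < 2 * m ∧ k % 2 = 1 then allTrueOn (evenFrom m 0) x else 0 := by
    intro k
    unfold steinFamily
    split_ifs
    · rw [signedIndicator, mul_pow, ← sq_abs (boolSign _), abs_boolSign, one_pow, one_mul, sq,
        allTrueOn_mul_self]
    · simp
  rw [sum_congr rfl fun k _ => hsq k, ← sum_filter, sum_const, card_filter_odd_range,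
    nsmul_eq_mul]

theorem abs_cubeEstar_steinFamily {d : ℕ} (hd1 : 1 ≤ d) (hdm : d ≤ m)
    (x : Fin (2 * m) → Bool) :
    |cubeEstar (2 * m) (2 * d - 1) (steinFamily m (2 * d - 1)) x| =
      (1 / 2) ^ d * allTrueOn (evenFrom m d) x := by
  have hk : 2 * d - 1 < 2 * m ∧ (2 * d - 1) % 2 = 1 := by omega
  have hhigh :
      (evenFrom m 0).filter (fun i : Fin (2 * m) => 2 * d - 1 ≤ (i : ℕ)) = evenFrom m d := by
    ext i
    simp only [evenFrom, mem_filter, mem_univ, true_and]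
    omega
  have hlow : #((evenFrom m 0).filter fun i : Fin (2 * m) => (i : ℕ) < 2 * d - 1) = d := by
    have hsplit := card_filter_add_card_filter_not (s := evenFrom m 0)
      (fun i : Fin (2 * m) => (i : ℕ) < 2 * d - 1)
    simp only [not_lt, hhigh, card_evenFrom] at hsplit
    omega
  rw [steinFamily, dif_pos hk, cubeEstar_signedIndicator (notMem_evenFrom m hk.2 0), hlow, hhigh,
    if_neg (lt_irrefl _), abs_mul, abs_mul, abs_boolSign, one_mul, abs_of_nonneg (by positivity),
    abs_of_nonneg (allTrueOn_nonneg _ _)]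

theorem cubeExpect_sqrt_sum_sq_steinFamily :
    cubeExpect (2 * m) (fun x => √(∑ k ∈ range (2 * m + 1), steinFamily m k x ^ 2)) =
      √m * (1 / 2) ^ m := by
  simp_rw [sum_sq_steinFamily, Real.sqrt_mul (Nat.cast_nonneg m), sqrt_allTrueOn]
  rw [cubeExpect_const_mul, cubeExpect_allTrueOn, card_evenFrom, Nat.sub_zero]

theorem sum_half_pow_mul_allTrueOn_le_sqrt (hm : 1 ≤ m) (x : Fin (2 * m) → Bool) :
    ∑ t ∈ range m, (1 / 2 : ℝ) ^ (t + 2) * allTrueOn (evenFrom m t) x ≤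
      √(∑ k ∈ range (2 * m + 1), cubeEstar (2 * m) k (steinFamily m k) x ^ 2) := by
  have htop : ∀ i ∈ evenFrom m m, x i = true := fun i hi => by
    simp only [evenFrom, mem_filter] at hi; omega
  have hex : ∃ d, ∀ i ∈ evenFrom m d, x i = true := ⟨m, htop⟩
  set d := Nat.find hex
  have hbelow : ∀ t < d, allTrueOn (evenFrom m t) x = 0 := fun t ht =>
    if_neg (Nat.find_min hex ht)
  -- `2 * d - 1` is a valid index only for `d ≥ 1`, whence `d'`.
  set d' := max d 1
  have hd'm : d' ≤ m := max_le (Nat.find_min' hex htop) hm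
  have hd' : ∀ i ∈ evenFrom m d', x i = true := fun i hi =>
    Nat.find_spec hex i (evenFrom_anti m (le_max_left d 1) hi)
  have hterm : |cubeEstar (2 * m) (2 * d' - 1) (steinFamily m (2 * d' - 1)) x| = (1 / 2) ^ d' := by
    rw [abs_cubeEstar_steinFamily m (le_max_right d 1) hd'm, allTrueOn, if_pos hd', mul_one]
  calc ∑ t ∈ range m, (1 / 2 : ℝ) ^ (t + 2) * allTrueOn (evenFrom m t) x
      = 1 / 2 * ∑ t ∈ range m, (1 / 2 : ℝ) ^ (t + 1) * allTrueOn (evenFrom m t) x := by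
        rw [mul_sum]
        exact sum_congr rfl fun t _ => by ring
    _ ≤ 1 / 2 * (1 / 2) ^ d := by
        gcongr
        exact sum_range_half_pow_mul_le (fun t => allTrueOn_le_one _ x) hbelow m
    _ ≤ (1 / 2) ^ d' := by
        rw [← pow_succ']
        exact pow_le_pow_of_le_one (by norm_num) (by norm_num) (show d' ≤ d + 1 by omega)
    _ ≤ √(∑ k ∈ range (2 * m + 1), cubeEstar (2 * m) k (steinFamily m k) x ^ 2) := by
        rw [← hterm]
        exact Real.abs_le_sqrt <|
          single_le_sum (f := fun k => cubeEstar (2 * m) k (steinFamily m k) x ^ 2)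
            (fun k _ => sq_nonneg _) (mem_range.2 (by omega))

theorem le_cubeExpect_sqrt_sum_sq_cubeEstar_steinFamily (hm : 1 ≤ m) :
    m * (1 / 2 : ℝ) ^ (m + 2) ≤ cubeExpect (2 * m)
      (fun x => √(∑ k ∈ range (2 * m + 1), cubeEstar (2 * m) k (steinFamily m k) x ^ 2)) := by
  have hterm : ∀ t ∈ range m, (1 / 2 : ℝ) ^ (t + 2) * (1 / 2) ^ (m - t) = (1 / 2) ^ (m + 2) :=
    fun t ht => by rw [← pow_add, show t + 2 + (m - t) = m + 2 by rw [mem_range] at ht; omega]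
  calc (m : ℝ) * (1 / 2) ^ (m + 2)
      = ∑ t ∈ range m, (1 / 2 : ℝ) ^ (t + 2) * (1 / 2) ^ (m - t) := by
        rw [sum_congr rfl hterm, sum_const, card_range, nsmul_eq_mul]
    _ = cubeExpect (2 * m)
          (fun x => ∑ t ∈ range m, (1 / 2 : ℝ) ^ (t + 2) * allTrueOn (evenFrom m t) x) := by
        rw [cubeExpect_sum]
        refine sum_congr rfl fun t _ => ?_
        rw [cubeExpect_const_mul, cubeExpect_allTrueOn, card_evenFrom]
    _ ≤ _ := cubeExpect_mono (sum_half_pow_mul_allTrueOn_le_sqrt m hm)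

end Construction

/-- failure of the `L¹` Stein inequality for the co-dyadic filtration
on `{0,1}^n`, even under the assumption `E^*_{k+1} f_k = 0` (Theorem `drzewa`). -/
theorem stmt6 :
    ∀ c : ℝ, 0 < c → ∃ n : ℕ, ∃ f : ℕ → (Fin n → Bool) → ℝ,
      (∀ k ≤ n, cubeEstar n (k + 1) (f k) = 0) ∧
      cubeExpect n (fun x => Real.sqrt (∑ k ∈ Finset.range (n + 1), (f k x) ^ 2)) <
        c * cubeExpect n
            (fun x => Real.sqrt (∑ k ∈ Finset.range (n + 1), (cubeEstar n k (f k) x) ^ 2)) := by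
  intro c hc
  obtain ⟨m, hm⟩ := exists_nat_gt (16 / c ^ 2)
  have hm1 : 1 ≤ m := Nat.cast_pos.1 ((by positivity : (0 : ℝ) < 16 / c ^ 2).trans hm)
  have hcm : 4 < c * √m := by
    rw [← div_lt_iff₀' hc, Real.lt_sqrt (by positivity), div_pow]
    norm_num
    exact hm
  refine ⟨2 * m, steinFamily m, fun k _ => cubeEstar_succ_steinFamily m k, ?_⟩
  rw [cubeExpect_sqrt_sum_sq_steinFamily]
  refine lt_of_lt_of_le ?_ (mul_le_mul_of_nonneg_left
    (le_cubeExpect_sqrt_sum_sq_cubeEstar_steinFamily m hm1) hc.le)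
  have hpos : 0 < √m * (1 / 2 : ℝ) ^ m := by positivity
  have hsq : √m * √m = (m : ℝ) := Real.mul_self_sqrt (Nat.cast_nonneg m)
  set s := √(m : ℝ)
  rw [← hsq, pow_add]
  linarith [mul_lt_mul_of_pos_right hcm hpos]
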